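/- arXiv:1806.06181 — 3 statements merged into one kernel-verified Lean document; each statement's English description precedes it below -/
import Mathlib

section
/- Let G be a locally compact totally disconnected group with a fixed Haar measure. If φ and ψ are locally constant compactly supported complex-valued functions on G such that π(φ) = π(ψ) for every irreducible smooth (tempered) representation π of G, then φ = ψ. (Simplified version for a finite group K: if φ, ψ : K → ℂ satisfy λ(φ) = λ(ψ) for every irreducible complex representation λ of K, then φ = ψ.) -/
/-!
By Maschke's theorem `ℂ[K]` is semisimple, so it is the sum of its simple left ideals. Each simple
left ideal `W` is an irreducible representation of `K` on which `λ(φ)` acts as left multiplication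
by `∑ₖ φ(k) k`. Hence `∑ₖ φ(k) k` and `∑ₖ ψ(k) k` agree on every simple left ideal, so on `1`,
and `φ = ψ` because the group elements form a basis of `ℂ[K]`.
-/

open Finset

def IrrRep {K V : Type} [Group K] [AddCommMonoid V] [Module ℂ V]
    (ρ : Representation ℂ K V) : Prop :=
  (⊥ : Submodule ℂ V) ≠ ⊤ ∧
  ∀ W : Submodule ℂ V, (∀ k : K, ∀ v ∈ W, ρ k v ∈ W) → W = ⊥ ∨ W = ⊤

open scoped MonoidAlgebra

namespace Representation

section

variable {k G : Type*} [CommSemiring k] [Monoid G]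
variable (M : Type*) [AddCommMonoid M] [Module k M] [Module k[G] M] [IsScalarTower k k[G] M]

theorem asAlgebraHom_ofModule' : (ofModule' (G := G) M).asAlgebraHom = Algebra.lsmul k k M :=
  (MonoidAlgebra.lift k (M →ₗ[k] M) G).apply_symm_apply _

theorem ofModule'_apply (g : G) (m : M) :
    ofModule' (k := k) M g m = MonoidAlgebra.single g (1 : k) • m := by
  rw [← asAlgebraHom_single_one, asAlgebraHom_ofModule']
  rfl

variable {M} in
theorem smul_mem_of_forall_ofModule'_mem {U : Submodule k M}
    (hU : ∀ g : G, ∀ m ∈ U, ofModule' (k := k) M g m ∈ U) (r : k[G]) {m : M} (hm : m ∈ U) :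
    r • m ∈ U := by
  induction r using MonoidAlgebra.induction_linear with
  | zero => simp
  | add r s hr hs => rw [add_smul]; exact U.add_mem hr hs
  | single g a =>
    rw [← mul_one a, ← smul_eq_mul, ← MonoidAlgebra.smul_single, smul_assoc, ← ofModule'_apply]
    exact U.smul_mem a (hU g m hm)

end

theorem sum_smul_eq_asAlgebraHom {k G V : Type*} [CommSemiring k] [Monoid G] [Fintype G]
    [AddCommMonoid V] [Module k V] (ρ : Representation k G V) (f : G → k) :
    ∑ g, f g • ρ g = ρ.asAlgebraHom ((MonoidAlgebra.basis G k).equivFun.symm f) := by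
  simp [Module.Basis.equivFun_symm_apply, map_sum]

end Representation

theorem IsSemisimpleRing.eq_of_forall_isSimpleModule_smul_eq {R : Type*} [Ring R]
    [IsSemisimpleRing R] {r s : R}
    (h : ∀ W : Submodule R R, IsSimpleModule R W → ∀ x ∈ W, r • x = s • x) : r = s := by
  have hone : (1 : R) ∈ sSup {W : Submodule R R | IsSimpleModule R W} := by
    rw [IsSemisimpleModule.sSup_simples_eq_top]
    trivial
  rw [sSup_eq_iSup'] at hone
  simpa using Submodule.iSup_induction (motive := fun x => r • x = s • x) _ hone
    (fun W x hx => h W W.2 x hx) (by simp) fun x y hx hy => by simp only [smul_add, hx, hy]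

theorem irrRep_ofModule' {G M : Type} [Group G] [AddCommGroup M] [Module ℂ M] [Module ℂ[G] M]
    [IsScalarTower ℂ ℂ[G] M] [IsSimpleModule ℂ[G] M] :
    IrrRep (Representation.ofModule' (G := G) M) := by
  have := IsSimpleModule.nontrivial ℂ[G] M
  refine ⟨bot_ne_top, fun U hU => ?_⟩
  let U' : Submodule ℂ[G] M :=
    { U.toAddSubmonoid with
      smul_mem' := fun r _ => Representation.smul_mem_of_forall_ofModule'_mem hU r }
  have hU' : U = U'.restrictScalars ℂ := rfl
  rcases eq_bot_or_eq_top U' with h | h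
  · exact .inl (by rw [hU', h, Submodule.restrictScalars_bot])
  · exact .inr (by rw [hU', h, Submodule.restrictScalars_top])

/-- If `φ, ψ : K → ℂ` satisfy `λ(φ) = λ(ψ)` for every irreducible complex
representation `λ` of the finite group `K`, then `φ = ψ`. -/
theorem stmt0 {K : Type} [Group K] [Fintype K] (φ ψ : K → ℂ)
    (h : ∀ (V : Type) [AddCommGroup V] [Module ℂ V] (ρ : Representation ℂ K V),
      IrrRep ρ → (∑ k : K, φ k • ρ k) = ∑ k : K, ψ k • ρ k) :
    φ = ψ := by
  refine (MonoidAlgebra.basis K ℂ).equivFun.symm.injective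
    (IsSemisimpleRing.eq_of_forall_isSimpleModule_smul_eq fun W _ x hx => ?_)
  have hW := h W _ irrRep_ofModule'
  simp only [Representation.sum_smul_eq_asAlgebraHom, Representation.asAlgebraHom_ofModule']
    at hW
  exact congr(Subtype.val ($hW ⟨x, hx⟩))
end

section
/- Let R be a ring and e ∈ R a full idempotent, i.e., e² = e and ReR = R. Then the functors X ↦ Re ⊗_{eRe} X and Y ↦ eR ⊗_R Y give an equivalence between the category of left eRe-modules and the category of left R-modules; in particular, R and eRe are Morita equivalent. -/
/-!
The functor `Y ↦ eY` from `R`-modules to `eRe`-modules is an equivalence, and its inverse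
equivalence is the one required.

Fullness of `e` gives `1 = ∑ cᵢ e dᵢ`, so every `y` is recovered from elements of `eY` as
`y = ∑ cᵢ • (e dᵢ y)`. Hence an `R`-linear map is determined by its restriction to `eY`, and an
`eRe`-linear `g : eY → eZ` extends to the `R`-linear map `y ↦ ∑ cᵢ • g (e dᵢ y)`: the functor is
fully faithful. It is essentially surjective for any idempotent: an `eRe`-module `X` is
`e Hom_{eRe}(eR, X)`, through evaluation at `e`; for full `e` the module `Hom_{eRe}(eR, X)` is
`Re ⊗_{eRe} X`, which is how the inverse is described on paper.
-/

/-- The corner `eRe` of a ring `R` at an idempotent `e`. -/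
def Corner {R : Type} [Ring R] (e : R) : Type := {x : R // e * x * e = x}

namespace Corner

variable {R : Type} [Ring R] {e : R} [he : Fact (e * e = e)]

theorem absorb_left (x : Corner e) : e * x.1 = x.1 := by
  conv_lhs => rw [← x.2]
  rw [← mul_assoc, ← mul_assoc, he.out]
  exact x.2

theorem absorb_right (x : Corner e) : x.1 * e = x.1 := by
  conv_lhs => rw [← x.2]
  rw [mul_assoc, he.out]
  exact x.2

instance : Zero (Corner e) := ⟨⟨0, by simp⟩⟩
instance : Add (Corner e) := ⟨fun x y => ⟨x.1 + y.1, by rw [mul_add, add_mul, x.2, y.2]⟩⟩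
instance : Neg (Corner e) := ⟨fun x => ⟨-x.1, by simp [x.2]⟩⟩
instance : One (Corner e) := ⟨⟨e, by rw [he.out, he.out]⟩⟩
instance : Mul (Corner e) :=
  ⟨fun x y => ⟨x.1 * y.1, by
    rw [← mul_assoc, mul_assoc e x.1 y.1, ← mul_assoc e x.1, absorb_left x, mul_assoc,
      absorb_right y]⟩⟩

instance : Ring (Corner e) where
  add_assoc a b c := Subtype.ext (add_assoc a.1 b.1 c.1)
  zero_add a := Subtype.ext (zero_add a.1)
  add_zero a := Subtype.ext (add_zero a.1)
  add_comm a b := Subtype.ext (add_comm a.1 b.1)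
  neg_add_cancel a := Subtype.ext (neg_add_cancel a.1)
  left_distrib a b c := Subtype.ext (left_distrib a.1 b.1 c.1)
  right_distrib a b c := Subtype.ext (right_distrib a.1 b.1 c.1)
  zero_mul a := Subtype.ext (zero_mul a.1)
  mul_zero a := Subtype.ext (mul_zero a.1)
  mul_assoc a b c := Subtype.ext (mul_assoc a.1 b.1 c.1)
  one_mul a := Subtype.ext (absorb_left a)
  mul_one a := Subtype.ext (absorb_right a)
  nsmul := nsmulRec
  zsmul := zsmulRec

end Corner

/-- The additive subgroup `eY = {y ∈ Y | e • y = y}` of an `R`-module `Y`. -/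
def eFixed {R : Type} [Ring R] (e : R) (he : e * e = e) (Y : Type) [AddCommGroup Y]
    [Module R Y] : AddSubgroup Y where
  carrier := {y | e • y = y}
  add_mem' := by
    intro a b ha hb
    simp only [Set.mem_setOf_eq] at *
    rw [smul_add, ha, hb]
  zero_mem' := by simp
  neg_mem' := by
    intro a ha
    simp only [Set.mem_setOf_eq] at *
    rw [smul_neg, ha]

open CategoryTheory

namespace Corner

@[ext] theorem ext {R : Type} [Ring R] {e : R} {x y : Corner e} (h : x.1 = y.1) : x = y :=
  Subtype.ext h

variable {R : Type} [Ring R] {e : R} [he : Fact (e * e = e)]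

def sandwich (a : R) : Corner e :=
  ⟨e * a * e, by rw [← mul_assoc, ← mul_assoc, he.out, mul_assoc, he.out]⟩

@[simp] theorem coe_one : (1 : Corner e).1 = e := rfl

@[simp] theorem coe_sandwich (a : R) : (sandwich a : Corner e).1 = e * a * e := rfl

end Corner

namespace eFixed

variable {R : Type} [Ring R] {e : R} [he : Fact (e * e = e)]
variable {Y Z : Type} [AddCommGroup Y] [Module R Y] [AddCommGroup Z] [Module R Z]

theorem mem_iff {y : Y} : y ∈ eFixed e he.out Y ↔ e • y = y := Iff.rfl

theorem idempotent_smul_coe (y : eFixed e he.out Y) : e • (y : Y) = y := y.2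

instance : Module (Corner e) (eFixed e he.out Y) where
  smul s y := ⟨s.1 • y.1, by
    show e • (s.1 • y.1) = _
    rw [smul_smul, Corner.absorb_left]⟩
  one_smul y := Subtype.ext y.2
  mul_smul s t y := Subtype.ext (mul_smul s.1 t.1 y.1)
  smul_add s y z := Subtype.ext (smul_add s.1 y.1 z.1)
  smul_zero s := Subtype.ext (smul_zero s.1)
  add_smul s t y := Subtype.ext (add_smul s.1 t.1 y.1)
  zero_smul y := Subtype.ext (zero_smul R y.1)

@[simp] theorem coe_corner_smul (s : Corner e) (y : eFixed e he.out Y) :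
    ((s • y : eFixed e he.out Y) : Y) = s.1 • (y : Y) := rfl

theorem idempotent_mul_coe (x : eFixed e he.out R) : e * (x : R) = x := x.2

theorem coe_mul_mem (x : eFixed e he.out R) (r : R) : (x : R) * r ∈ eFixed e he.out R := by
  rw [mem_iff, smul_eq_mul, ← mul_assoc, idempotent_mul_coe]

def idempotent : eFixed e he.out R := ⟨e, he.out⟩

@[simp] theorem coe_idempotent : (idempotent : eFixed e he.out R) = e := rfl

def toCorner : eFixed e he.out R →ₗ[Corner e] Corner e where
  toFun x := Corner.sandwich x.1
  map_add' x y := Corner.ext (by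
    change e * (x.1 + y.1) * e = e * x.1 * e + e * y.1 * e
    rw [mul_add, add_mul])
  map_smul' s x := Corner.ext (by
    change e * (s.1 * x.1) * e = s.1 * (e * x.1 * e)
    rw [← mul_assoc, Corner.absorb_left, idempotent_mul_coe, mul_assoc])

@[simp] theorem coe_toCorner (x : eFixed e he.out R) : (toCorner x).1 = x * e := by
  change e * x * e = x * e
  rw [idempotent_mul_coe]

variable (e) in
def proj : Y →+ eFixed e he.out Y where
  toFun y := ⟨e • y, by show e • e • y = e • y; rw [smul_smul, he.out]⟩
  map_zero' := Subtype.ext (smul_zero e)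
  map_add' y z := Subtype.ext (smul_add e y z)

@[simp] theorem coe_proj (y : Y) : (proj e y : Y) = e • y := rfl

theorem proj_smul_coe (a : R) (y : eFixed e he.out Y) :
    proj e (a • (y : Y)) = (Corner.sandwich a : Corner e) • y := by
  ext
  rw [coe_proj, coe_corner_smul, Corner.coe_sandwich, mul_smul, idempotent_smul_coe, ← mul_smul]

def map (f : Y →ₗ[R] Z) : eFixed e he.out Y →ₗ[Corner e] eFixed e he.out Z where
  toFun y := ⟨f y.1, by show e • f y.1 = f y.1; rw [← map_smul, idempotent_smul_coe]⟩
  map_add' y z := Subtype.ext (map_add f y.1 z.1)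
  map_smul' s y := Subtype.ext (map_smul f s.1 y.1)

section FullIdempotent

variable {ι : Type*} [Fintype ι] {c d : ι → R}

theorem sum_smul_proj (h1 : ∑ i, c i * e * d i = 1) (y : Y) :
    ∑ i, c i • (proj e (d i • y) : Y) = y := by
  simp_rw [coe_proj, smul_smul, ← mul_assoc, ← Finset.sum_smul, h1, one_smul]

theorem proj_smul_eq_sum (h1 : ∑ i, c i * e * d i = 1) (a : R) (y : Y) :
    proj e (a • y) = ∑ j, (Corner.sandwich (a * c j) : Corner e) • proj e (d j • y) := by
  conv_lhs => rw [← sum_smul_proj h1 y]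
  simp_rw [Finset.smul_sum, smul_smul, map_sum, proj_smul_coe]

variable (c d) in
def extend (h1 : ∑ i, c i * e * d i = 1)
    (g : eFixed e he.out Y →ₗ[Corner e] eFixed e he.out Z) : Y →ₗ[R] Z where
  toFun y := ∑ i, c i • (g (proj e (d i • y)) : Z)
  map_add' y z := by simp only [smul_add, map_add, AddSubgroup.coe_add, Finset.sum_add_distrib]
  map_smul' r y := by
    set w := fun j => g (proj e (d j • y))
    calc ∑ i, c i • (g (proj e (d i • r • y)) : Z)
        = ∑ i, c i • ∑ j, (proj e (d i • (r * c j) • (w j : Z)) : Z) := by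
          refine Finset.sum_congr rfl fun i _ => ?_
          simp_rw [smul_smul, proj_smul_eq_sum h1 (d i * r), map_sum, map_smul, proj_smul_coe,
            mul_assoc, AddSubgroup.val_finsetSum, coe_corner_smul]
          rfl
      _ = ∑ j, (r * c j) • (w j : Z) := by
          simp_rw [Finset.smul_sum]
          rw [Finset.sum_comm]
          exact Finset.sum_congr rfl fun j _ => sum_smul_proj h1 _
      _ = r • ∑ j, c j • (w j : Z) := by simp_rw [Finset.smul_sum, mul_smul]

theorem map_extend (h1 : ∑ i, c i * e * d i = 1)
    (g : eFixed e he.out Y →ₗ[Corner e] eFixed e he.out Z) : map (extend c d h1 g) = g := by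
  ext z
  change ∑ i, c i • (g (proj e (d i • (z : Y))) : Z) = g z
  simp_rw [proj_smul_coe, map_smul, ← proj_smul_coe]
  exact sum_smul_proj h1 _

theorem extend_map (h1 : ∑ i, c i * e * d i = 1) (f : Y →ₗ[R] Z) :
    extend c d h1 (map f) = f := by
  ext y
  change ∑ i, c i • f (e • d i • y) = f y
  simp_rw [← map_smul, ← map_sum]
  exact congrArg f (sum_smul_proj h1 y)

end FullIdempotent

end eFixed

def cornerFunctor {R : Type} [Ring R] (e : R) [he : Fact (e * e = e)] :
    ModuleCat.{0} R ⥤ ModuleCat.{0} (Corner e) where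
  obj Y := ModuleCat.of _ (eFixed e he.out Y)
  map f := ModuleCat.ofHom (eFixed.map f.hom)

def cornerFunctor.fullyFaithful {R : Type} [Ring R] {e : R} [Fact (e * e = e)]
    {ι : Type*} [Fintype ι] {c d : ι → R} (h1 : ∑ i, c i * e * d i = 1) :
    (cornerFunctor e).FullyFaithful where
  preimage g := ModuleCat.ofHom (eFixed.extend c d h1 g.hom)
  map_preimage g := ModuleCat.hom_ext (eFixed.map_extend h1 g.hom)
  preimage_map f := ModuleCat.hom_ext (eFixed.extend_map h1 f.hom)

def CornerHom {R : Type} [Ring R] (e : R) [he : Fact (e * e = e)] (X : Type) [AddCommGroup X]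
    [Module (Corner e) X] : Type :=
  eFixed e he.out R →ₗ[Corner e] X

namespace CornerHom

variable {R : Type} [Ring R] {e : R} [he : Fact (e * e = e)]
variable {X : Type} [AddCommGroup X] [Module (Corner e) X]

instance : AddCommGroup (CornerHom e X) := LinearMap.addCommGroup

instance : FunLike (CornerHom e X) (eFixed e he.out R) X := LinearMap.instFunLike

instance : LinearMapClass (CornerHom e X) (Corner e) (eFixed e he.out R) X :=
  LinearMap.semilinearMapClass

@[ext] theorem ext {f g : CornerHom e X} (h : ∀ x, f x = g x) : f = g := DFunLike.ext f g h

instance : Module R (CornerHom e X) where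
  smul r f := LinearMap.comp f (eFixed.map (LinearMap.toSpanSingleton R R r))
  one_smul f := ext fun x => congrArg f (Subtype.ext (mul_one x.1))
  mul_smul r s f := ext fun x => congrArg f (Subtype.ext (mul_assoc x.1 r s).symm)
  smul_add _ _ _ := rfl
  smul_zero _ := rfl
  add_smul r s f := ext fun x => (congrArg f (Subtype.ext (mul_add x.1 r s))).trans (map_add f _ _)
  zero_smul f := ext fun x => (congrArg f (Subtype.ext (mul_zero x.1))).trans (map_zero f)

theorem smul_apply (r : R) (f : CornerHom e X) (x : eFixed e he.out R) :
    (r • f) x = f ⟨x.1 * r, eFixed.coe_mul_mem x r⟩ :=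
  rfl

variable (e X) in
def evalIdempotent : eFixed e he.out (CornerHom e X) →ₗ[Corner e] X where
  toFun f := f.1 eFixed.idempotent
  map_add' _ _ := rfl
  map_smul' s f := by
    change (s.1 • f.1) eFixed.idempotent = s • f.1 eFixed.idempotent
    rw [smul_apply, ← map_smul]
    congr 1
    ext
    simp [Corner.absorb_left, Corner.absorb_right]

def smulRight (u : X) : CornerHom e X := eFixed.toCorner.smulRight u

theorem smulRight_apply (u : X) (x : eFixed e he.out R) :
    smulRight u x = eFixed.toCorner x • u :=
  rfl

def coevalIdempotent (u : X) : eFixed e he.out (CornerHom e X) :=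
  ⟨smulRight u, by
    rw [eFixed.mem_iff]
    ext x
    rw [smul_apply, smulRight_apply, smulRight_apply]
    congr 1
    ext
    simp [mul_assoc, he.out]⟩

variable (e X) in
def evalIdempotentEquiv : eFixed e he.out (CornerHom e X) ≃ₗ[Corner e] X where
  __ := evalIdempotent e X
  invFun := coevalIdempotent
  left_inv f := by
    ext x
    change eFixed.toCorner x • f.1 eFixed.idempotent = f.1 x
    conv_rhs => rw [← eFixed.idempotent_smul_coe f, smul_apply]
    rw [← map_smul]
    congr 1
    ext
    simp [mul_assoc, he.out]
  right_inv u := by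
    change eFixed.toCorner (eFixed.idempotent (e := e)) • u = u
    rw [show eFixed.toCorner (eFixed.idempotent (e := e)) = 1 by ext; simp [he.out], one_smul]

end CornerHom

instance {R : Type} [Ring R] (e : R) [Fact (e * e = e)] : (cornerFunctor e).EssSurj where
  mem_essImage X :=
    ⟨ModuleCat.of R (CornerHom e X), ⟨(CornerHom.evalIdempotentEquiv e X).toModuleIso⟩⟩

/-- Morita equivalence via a full idempotent: if `e ∈ R` is a full idempotent
(`e² = e` and `ReR = R`), then the categories of left `eRe`-modules and left `R`-modules
are equivalent via the functors `X ↦ Re ⊗_{eRe} X` and `Y ↦ eR ⊗_R Y`; the latter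
functor is (naturally isomorphic to) `Y ↦ eY`, as recorded by the additive isomorphism
`φ` below, which intertwines the `eRe`-action with multiplication by `eRe ⊆ R`.
In particular `R` and `eRe` are Morita equivalent. -/
theorem stmt6 {R : Type} [Ring R] (e : R) (he : e * e = e)
    (hfull : ∀ r : R, ∃ (n : ℕ) (c d : Fin n → R), r = ∑ i, c i * e * d i) :
    haveI : Fact (e * e = e) := ⟨he⟩
    ∃ E : ModuleCat.{0} (Corner e) ≌ ModuleCat.{0} R,
      ∀ Y : ModuleCat.{0} R,
        ∃ φ : (E.inverse.obj Y) ≃+ eFixed e he Y,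
          ∀ (s : Corner e) (x : E.inverse.obj Y),
            (φ (s • x) : Y) = s.1 • (φ x : Y) := by
  have : Fact (e * e = e) := ⟨he⟩
  obtain ⟨n, c, d, h1⟩ := hfull 1
  have hF := cornerFunctor.fullyFaithful h1.symm
  have : (cornerFunctor e).IsEquivalence := { full := hF.full, faithful := hF.faithful }
  exact ⟨(cornerFunctor e).asEquivalence.symm, fun Y => ⟨AddEquiv.refl _, fun _ _ => rfl⟩⟩
end

section
/- Let G be a finite group, e, f ∈ ℂ[G] idempotents with e ⋆ f = f ⋆ e = f and such that f is a full idempotent of H := e ⋆ ℂ[G] ⋆ e (i.e., H ⋆ f ⋆ H = H). Define H_{ef} := e ⋆ ℂ[G] ⋆ f and H_{fe} := f ⋆ ℂ[G] ⋆ e. Then H = H_{ef} ⋆ H_{fe} and f ⋆ ℂ[G] ⋆ f = H_{fe} ⋆ H_{ef}. -/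
open MonoidAlgebra

/-- Let `G` be a finite group and `e, f ∈ ℂ[G]` idempotents with `e f = f e = f` such
that `f` is a full idempotent of `H := e ℂ[G] e`.  With `H_{ef} := e ℂ[G] f` and
`H_{fe} := f ℂ[G] e`, one has `H = H_{ef} ⋆ H_{fe}` and `f ℂ[G] f = H_{fe} ⋆ H_{ef}`.
(Note `x ∈ e ℂ[G] e` iff `x = e x e`, etc.) -/
theorem stmt18 {G : Type} [Group G] [Fintype G]
    (e f : MonoidAlgebra ℂ G)
    (he : e * e = e) (hf : f * f = f)
    (hef : e * f = f) (hfe : f * e = f)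
    (hfull : ∀ x : MonoidAlgebra ℂ G, x = e * x * e →
      x ∈ Submodule.span ℂ {y : MonoidAlgebra ℂ G | ∃ p q : MonoidAlgebra ℂ G,
        p = e * p * e ∧ q = e * q * e ∧ y = p * f * q}) :
    Submodule.span ℂ {y : MonoidAlgebra ℂ G | ∃ p q : MonoidAlgebra ℂ G,
        p = e * p * f ∧ q = f * q * e ∧ y = p * q} =
      Submodule.span ℂ {x : MonoidAlgebra ℂ G | x = e * x * e} ∧
    Submodule.span ℂ {y : MonoidAlgebra ℂ G | ∃ p q : MonoidAlgebra ℂ G,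
        p = f * p * e ∧ q = e * q * f ∧ y = p * q} =
      Submodule.span ℂ {x : MonoidAlgebra ℂ G | x = f * x * f} := by
  have he' : ∀ x : MonoidAlgebra ℂ G, e * (e * x) = e * x := fun x => by
    rw [← mul_assoc, he]
  have hf' : ∀ x : MonoidAlgebra ℂ G, f * (f * x) = f * x := fun x => by
    rw [← mul_assoc, hf]
  have hef' : ∀ x : MonoidAlgebra ℂ G, e * (f * x) = f * x := fun x => by
    rw [← mul_assoc, hef]
  have hfe' : ∀ x : MonoidAlgebra ℂ G, f * (e * x) = f * x := fun x => by
    rw [← mul_assoc, hfe]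
  have habs : ∀ p : MonoidAlgebra ℂ G, p = e * p * e → e * p = p ∧ p * e = p := by
    intro p hp
    constructor
    · conv_lhs => rw [hp]
      conv_rhs => rw [hp]
      simp [mul_assoc, he', he]
    · conv_lhs => rw [hp]
      conv_rhs => rw [hp]
      simp [mul_assoc, he', he]
  constructor
  · apply le_antisymm
    · rw [Submodule.span_le]
      rintro y ⟨p, q, hp, hq, rfl⟩
      apply Submodule.subset_span
      show p * q = e * (p * q) * e
      conv_lhs => rw [hp, hq]
      conv_rhs => rw [hp, hq]
      simp [mul_assoc, he', hf', hef', hfe', he, hf, hef, hfe]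
    · rw [Submodule.span_le]
      intro x hx
      have hx' : x = e * x * e := hx
      refine Submodule.span_le.mpr ?_ (hfull x hx')
      rintro y ⟨p, q, hp, hq, rfl⟩
      obtain ⟨hep, hpe⟩ := habs p hp
      obtain ⟨heq, hqe⟩ := habs q hq
      apply Submodule.subset_span
      refine ⟨p * f, f * q, ?_, ?_, ?_⟩
      · simp only [mul_assoc, hf]
        rw [← mul_assoc, hep]
      · rw [hf', mul_assoc, hqe]
      · simp only [mul_assoc, hf']
  · apply le_antisymm
    · rw [Submodule.span_le]
      rintro y ⟨p, q, hp, hq, rfl⟩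
      apply Submodule.subset_span
      show p * q = f * (p * q) * f
      conv_lhs => rw [hp, hq]
      conv_rhs => rw [hp, hq]
      simp [mul_assoc, he', hf', hef', hfe', he, hf, hef, hfe]
    · rw [Submodule.span_le]
      intro x hx
      have hx' : x = f * x * f := hx
      have hxe : x = e * x * e := by
        conv_lhs => rw [hx']
        conv_rhs => rw [hx']
        simp [mul_assoc, he', hf', hef', hfe', he, hf, hef, hfe]
      have hmem := hfull x hxe
      have key : f * x * f ∈ Submodule.span ℂ {y : MonoidAlgebra ℂ G | ∃ p q : MonoidAlgebra ℂ G,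
          p = f * p * e ∧ q = e * q * f ∧ y = p * q} := by
        refine Submodule.span_induction
          (p := fun z _ => f * z * f ∈ Submodule.span ℂ
            {y : MonoidAlgebra ℂ G | ∃ p q : MonoidAlgebra ℂ G,
              p = f * p * e ∧ q = e * q * f ∧ y = p * q}) ?_ ?_ ?_ ?_ hmem
        · rintro y ⟨p, q, hp, hq, rfl⟩
          apply Submodule.subset_span
          refine ⟨f * p * f, f * q * f, ?_, ?_, ?_⟩
          · simp [mul_assoc, hf', hfe', hfe, hf]
          · simp [mul_assoc, hf', hef', hef, hf]
          · simp [mul_assoc, hf', hef', hfe']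
        · simp
        · intro a b _ _ ha hb
          have : f * (a + b) * f = f * a * f + f * b * f := by
            rw [mul_add, add_mul]
          rw [this]
          exact Submodule.add_mem _ ha hb
        · intro c a _ ha
          have : f * (c • a) * f = c • (f * a * f) := by
            rw [mul_smul_comm, smul_mul_assoc]
          rw [this]
          exact Submodule.smul_mem _ c ha
      rw [hx']
      exact key
end
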